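/- Let λ ∈ (0,1). Suppose there are sequences γₙ, λₙ ∈ (0,1) with γₙ < λₙ for all n, γₙ → λ and λₙ → λ, and functions fₙ ∈ ℬ with fₙ(γₙ) = fₙ(λₙ) = 0. Then there exists f ∈ ℬ with a double zero at λ, i.e. f(λ) = f′(λ) = 0. -/

import Mathlib

open Set Filter Topology

noncomputable section

/-- The function on `(-1,1)` defined by the power series with coefficient sequence `a`. -/
def seriesFun (a : ℕ → ℝ) (x : ℝ) : ℝ := ∑' n, a n * x ^ n

/-- `a` is the coefficient sequence of a power series in the class `ℬ`:
constant term `1` and all other coefficients in `{-1, 0, 1}`. -/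
def memB (a : ℕ → ℝ) : Prop :=
  a 0 = 1 ∧ ∀ n, 1 ≤ n → a n = -1 ∨ a n = 0 ∨ a n = 1

/-- `a` is the coefficient sequence of a power series in the class `ℬ_{[-1,1]}`:
constant term `1` and all other coefficients in `[-1, 1]`. -/
def memBI (a : ℕ → ℝ) : Prop :=
  a 0 = 1 ∧ ∀ n, 1 ≤ n → a n ∈ Set.Icc (-1 : ℝ) 1

/-- `F` has at least `k` zeros in `(0, t]`, counted with multiplicity
(multiplicity = order of vanishing). -/
def hasZeros (F : ℝ → ℝ) (k : ℕ) (t : ℝ) : Prop :=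
  ∃ (s : Finset ℝ) (d : ℝ → ℕ),
    (∀ x ∈ s, x ∈ Set.Ioc (0 : ℝ) t ∧ 1 ≤ d x ∧ ∀ j < d x, iteratedDeriv j F x = 0) ∧
    k ≤ ∑ x ∈ s, d x

/-- `ξ_k(F)`: the `k`-th zero of `F` in `(0,1)` counted with multiplicity,
with the convention `ξ_k(F) = 1` if there are fewer than `k` such zeros. -/
def xi (k : ℕ) (F : ℝ → ℝ) : ℝ :=
  sInf (insert 1 {t | t ∈ Set.Ioo (0 : ℝ) 1 ∧ hasZeros F k t})

/-- `α₂`: the smallest double zero in `(0,1)` of a power series in `ℬ_{[-1,1]}`. -/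
def alpha2 : ℝ :=
  sInf {x | x ∈ Set.Ioo (0 : ℝ) 1 ∧
    ∃ a, memBI a ∧ seriesFun a x = 0 ∧ deriv (seriesFun a) x = 0}

/-- `α₃`: the smallest triple zero in `(0,1)` of a power series in `ℬ_{[-1,1]}`. -/
def alpha3 : ℝ :=
  sInf {x | x ∈ Set.Ioo (0 : ℝ) 1 ∧
    ∃ a, memBI a ∧ seriesFun a x = 0 ∧ deriv (seriesFun a) x = 0 ∧
      iteratedDeriv 2 (seriesFun a) x = 0}

/-- The set of values `ξ₂(f)` over `f ∈ ℬ_{[-1,1]}` with `f(γ) = 0`. -/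
def phiSet (γ : ℝ) : Set ℝ :=
  {y | ∃ a, memBI a ∧ seriesFun a γ = 0 ∧ y = xi 2 (seriesFun a)}

/-- `φ(γ) = min { ξ₂(f) : f ∈ ℬ_{[-1,1]}, f(γ) = 0 }`. -/
def phi (γ : ℝ) : ℝ := sInf (phiSet γ)

/-- The set of values `ξ₃(f)` over `f ∈ ℬ_{[-1,1]}` with `f(γ) = 0`. -/
def psiSet (γ : ℝ) : Set ℝ :=
  {y | ∃ a, memBI a ∧ seriesFun a γ = 0 ∧ y = xi 3 (seriesFun a)}

/-- `ψ(γ) = min { ξ₃(f) : f ∈ ℬ_{[-1,1]}, f(γ) = 0 }`. -/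
def psi (γ : ℝ) : ℝ := sInf (psiSet γ)

/-- The `(*)`-function `h_k^{(a)}(x) = 1 - x - ⋯ - x^(k-1) + a x^k + x^(k+1)/(1-x)`. -/
def hstar (k : ℕ) (a : ℝ) (x : ℝ) : ℝ :=
  1 - ∑ i ∈ Finset.Ico 1 k, x ^ i + a * x ^ k + x ^ (k + 1) / (1 - x)

/-- The `(**)`-function
`H_{k,ℓ}^{(a,b)}(x) = 1 - ∑_{i=1}^{k-1} x^i + a x^k + ∑_{i=k+1}^{ℓ-1} x^i + b x^ℓ - x^(ℓ+1)/(1-x)`. -/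
def Hstar (k l : ℕ) (a b : ℝ) (x : ℝ) : ℝ :=
  1 - ∑ i ∈ Finset.Ico 1 k, x ^ i + a * x ^ k + ∑ i ∈ Finset.Ico (k + 1) l, x ^ i +
    b * x ^ l - x ^ (l + 1) / (1 - x)

/-- The set `𝒩₊`. -/
def Nplus : Set (ℝ × ℝ) :=
  {p | 0 < p.1 ∧ p.1 < p.2 ∧ p.2 < 1 ∧
    ∃ a, memB a ∧ seriesFun a p.1 = 0 ∧ seriesFun a p.2 = 0}

/-- The set `𝒩̃₊`. -/
def NtildePlus : Set (ℝ × ℝ) :=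
  {p | p ∈ Nplus ∧ ∃ a, memB a ∧ seriesFun a p.1 = 0 ∧ seriesFun a p.2 = 0 ∧
    hasZeros (seriesFun a) 3 p.2}

/-- The "trivial" part `𝒩_t` of the connectedness locus. -/
def Nt : Set (ℝ × ℝ) :=
  {p | p.1 ∈ Set.Ioo (-1 : ℝ) 1 ∧ p.2 ∈ Set.Ioo (-1 : ℝ) 1 ∧ 1 / 2 ≤ |p.1 * p.2|}

/-- The region `Δ`. -/
def Delta : Set (ℝ × ℝ) :=
  {p | p.1 ∈ Set.Ioo (0 : ℝ) 1 ∧ p.2 ∈ Set.Ioo (0 : ℝ) 1 ∧ p.1 < p.2 ∧ p.1 * p.2 < 1 / 2}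

/-
Compactness of `ℬ` in the product topology gives a subsequence of the `fₙ` converging
coefficientwise to some `f ∈ ℬ`. By Rolle, each `fₙ'` vanishes at some `μₙ ∈ (γₙ, λₙ)`, so
`μₙ → λ`. Since the coefficients are bounded by `1` and all points eventually lie in a fixed
interval `[-r, r]` with `r < 1`, dominated convergence lets us pass to the limit in `fₙ(λₙ) = 0` and
`fₙ'(μₙ) = 0`, giving `f(λ) = f'(λ) = 0`.
-/

def seriesDeriv (a : ℕ → ℝ) (x : ℝ) : ℝ := ∑' k, a k * ((k : ℝ) * x ^ (k - 1))

lemma abs_le_one_of_memB {a : ℕ → ℝ} (ha : memB a) (k : ℕ) : |a k| ≤ 1 := by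
  rcases Nat.eq_zero_or_pos k with rfl | hk
  · simp [ha.1]
  · rcases ha.2 k hk with h | h | h <;> simp [h]

lemma isCompact_setOf_memB : IsCompact {a : ℕ → ℝ | memB a} := by
  have hpi : {a : ℕ → ℝ | memB a} =
      Set.univ.pi (fun k => if k = 0 then ({1} : Set ℝ) else {-1, 0, 1}) := by
    ext a
    simp only [memB, Set.mem_ofPred_eq, Set.mem_univ_pi]
    constructor
    · rintro ⟨h0, h⟩ k
      rcases Nat.eq_zero_or_pos k with rfl | hk
      · simpa using h0
      · simpa [hk.ne'] using h k hk
    · intro h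
      exact ⟨by simpa using h 0, fun k hk => by simpa [Nat.one_le_iff_ne_zero.1 hk] using h k⟩
  rw [hpi]
  exact isCompact_univ_pi fun k => by
    split
    · exact isCompact_singleton
    · exact (Set.toFinite _).isCompact

lemma summable_natCast_mul_pow_sub_one {r : ℝ} (hr : ‖r‖ < 1) :
    Summable (fun k : ℕ => (k : ℝ) * r ^ (k - 1)) := by
  rw [← summable_nat_add_iff 1]
  simpa using summable_descFactorial_mul_geometric_of_norm_lt_one 1 hr

lemma abs_natCast_mul_pow_sub_one_le {x r : ℝ} (hx : |x| ≤ r) (k : ℕ) :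
    |(k : ℝ) * x ^ (k - 1)| ≤ (k : ℝ) * r ^ (k - 1) := by
  rw [abs_mul, Nat.abs_cast, abs_pow]
  gcongr

lemma abs_mul_le_of_abs_le_one {c v T : ℝ} (hc : |c| ≤ 1) (hv : |v| ≤ T) : |c * v| ≤ T :=
  (abs_mul c v).trans_le ((mul_le_of_le_one_left (abs_nonneg v) hc).trans hv)

lemma summable_mul_pow {a : ℕ → ℝ} (ha : ∀ k, |a k| ≤ 1) {x : ℝ} (hx : |x| < 1) :
    Summable (fun k => a k * x ^ k) :=
  .of_norm_bounded (summable_geometric_of_abs_lt_one (by rwa [abs_abs])) fun k =>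
    abs_mul_le_of_abs_le_one (ha k) (abs_pow x k).le

lemma hasDerivAt_seriesFun {a : ℕ → ℝ} (ha : ∀ k, |a k| ≤ 1) {x : ℝ} (hx : |x| < 1) :
    HasDerivAt (seriesFun a) (seriesDeriv a x) x := by
  obtain ⟨r, hxr, hr1⟩ := exists_between hx
  have hr : ‖r‖ < 1 := by rwa [Real.norm_eq_abs, abs_of_pos ((abs_nonneg x).trans_lt hxr)]
  have hxt : x ∈ Ioo (-r) r := abs_lt.1 hxr
  refine hasDerivAt_tsum_of_isPreconnected (summable_natCast_mul_pow_sub_one hr) isOpen_Ioo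
    isPreconnected_Ioo (fun k y _ => (hasDerivAt_pow k y).const_mul (a k)) (fun k y hy => ?_)
    hxt (summable_mul_pow ha hx) hxt
  exact abs_mul_le_of_abs_le_one (ha k) (abs_natCast_mul_pow_sub_one_le (abs_lt.2 hy).le k)

lemma exists_seriesDeriv_eq_zero {a : ℕ → ℝ} (ha : ∀ k, |a k| ≤ 1) {x y : ℝ}
    (hx : -1 < x) (hxy : x < y) (hy : y < 1) (hax : seriesFun a x = 0) (hay : seriesFun a y = 0) :
    ∃ z ∈ Ioo x y, seriesDeriv a z = 0 := by
  have hdiff : ∀ z ∈ Icc x y, HasDerivAt (seriesFun a) (seriesDeriv a z) z := fun z hz =>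
    hasDerivAt_seriesFun ha (abs_lt.2 ⟨by linarith [hz.1], by linarith [hz.2]⟩)
  obtain ⟨z, hz, hz0⟩ := exists_deriv_eq_zero hxy
    (fun z hz => (hdiff z hz).continuousAt.continuousWithinAt) (hax.trans hay.symm)
  exact ⟨z, hz, (hdiff z (Ioo_subset_Icc_self hz)).deriv ▸ hz0⟩

section Limits

variable {ι : Type*} {l : Filter ι} {c : ι → ℕ → ℝ} {a : ℕ → ℝ} {x : ι → ℝ} {x₀ : ℝ}

lemma tendsto_tsum_mul_of_dominated {v : ι → ℕ → ℝ} {w T : ℕ → ℝ} (hT : Summable T)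
    (hc : ∀ i k, |c i k| ≤ 1) (hca : Tendsto c l (𝓝 a))
    (hvw : ∀ k, Tendsto (fun i => v i k) l (𝓝 (w k))) (hvT : ∀ᶠ i in l, ∀ k, |v i k| ≤ T k) :
    Tendsto (fun i => ∑' k, c i k * v i k) l (𝓝 (∑' k, a k * w k)) :=
  tendsto_tsum_of_dominated_convergence hT
    (fun k => ((continuous_apply k).tendsto a |>.comp hca).mul (hvw k))
    (hvT.mono fun i hi k => abs_mul_le_of_abs_le_one (hc i k) (hi k))

lemma exists_eventually_abs_le_of_tendsto (hx : Tendsto x l (𝓝 x₀)) (hx₀ : |x₀| < 1) :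
    ∃ r, ‖r‖ < 1 ∧ ∀ᶠ i in l, |x i| ≤ r := by
  obtain ⟨r, hx₀r, hr1⟩ := exists_between hx₀
  refine ⟨r, ?_, (hx.abs.eventually_lt_const hx₀r).mono fun _ h => h.le⟩
  rwa [Real.norm_eq_abs, abs_of_nonneg ((abs_nonneg x₀).trans hx₀r.le)]

lemma tendsto_seriesFun (hc : ∀ i k, |c i k| ≤ 1) (hca : Tendsto c l (𝓝 a))
    (hx : Tendsto x l (𝓝 x₀)) (hx₀ : |x₀| < 1) :
    Tendsto (fun i => seriesFun (c i) (x i)) l (𝓝 (seriesFun a x₀)) := by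
  obtain ⟨r, hr, hxr⟩ := exists_eventually_abs_le_of_tendsto hx hx₀
  refine tendsto_tsum_mul_of_dominated (summable_geometric_of_norm_lt_one hr) hc hca
    (fun k => hx.pow k) (hxr.mono fun i hi k => ?_)
  rw [abs_pow]
  exact pow_le_pow_left₀ (abs_nonneg _) hi k

lemma tendsto_seriesDeriv (hc : ∀ i k, |c i k| ≤ 1) (hca : Tendsto c l (𝓝 a))
    (hx : Tendsto x l (𝓝 x₀)) (hx₀ : |x₀| < 1) :
    Tendsto (fun i => seriesDeriv (c i) (x i)) l (𝓝 (seriesDeriv a x₀)) := by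
  obtain ⟨r, hr, hxr⟩ := exists_eventually_abs_le_of_tendsto hx hx₀
  exact tendsto_tsum_mul_of_dominated (summable_natCast_mul_pow_sub_one hr) hc hca
    (fun k => tendsto_const_nhds.mul (hx.pow _))
    (hxr.mono fun i hi k => abs_natCast_mul_pow_sub_one_le hi k)

end Limits

/-- If `fₙ ∈ ℬ` have zeros `γₙ < λₙ` in `(0,1)` with `γₙ → λ` and
`λₙ → λ ∈ (0,1)`, then some `f ∈ ℬ` has a double zero at `λ`. -/
theorem stmt18 (lam : ℝ) (hlam : lam ∈ Set.Ioo (0 : ℝ) 1) (γs lams : ℕ → ℝ)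
    (hmem : ∀ n, γs n ∈ Set.Ioo (0 : ℝ) 1 ∧ lams n ∈ Set.Ioo (0 : ℝ) 1)
    (hlt : ∀ n, γs n < lams n)
    (hγlim : Tendsto γs atTop (nhds lam)) (hlamlim : Tendsto lams atTop (nhds lam))
    (f : ℕ → ℕ → ℝ) (hf : ∀ n, memB (f n))
    (hz : ∀ n, seriesFun (f n) (γs n) = 0 ∧ seriesFun (f n) (lams n) = 0) :
    ∃ a : ℕ → ℝ, memB a ∧ seriesFun a lam = 0 ∧ deriv (seriesFun a) lam = 0 := by
  obtain ⟨a, ha, φ, hφ, hfa⟩ := isCompact_setOf_memB.tendsto_subseq hf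
  have hf1 : ∀ n k, |f n k| ≤ 1 := fun n => abs_le_one_of_memB (hf n)
  have hlam1 : |lam| < 1 := abs_lt.2 ⟨by linarith [hlam.1], hlam.2⟩
  choose μ hμ hμ0 using fun n => exists_seriesDeriv_eq_zero (hf1 n)
    (by linarith [(hmem n).1.1]) (hlt n) (hmem n).2.2 (hz n).1 (hz n).2
  have hφ' := hφ.tendsto_atTop
  have hμlim : Tendsto (μ ∘ φ) atTop (𝓝 lam) :=
    tendsto_of_tendsto_of_tendsto_of_le_of_le (hγlim.comp hφ') (hlamlim.comp hφ')
      (fun n => (hμ (φ n)).1.le) (fun n => (hμ (φ n)).2.le)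
  refine ⟨a, ha, ?_, ?_⟩
  · have h := (tendsto_seriesFun (fun n => hf1 (φ n)) hfa (hlamlim.comp hφ') hlam1).congr
      fun n => (hz (φ n)).2
    exact (tendsto_const_nhds_iff.1 h).symm
  · have h := (tendsto_seriesDeriv (fun n => hf1 (φ n)) hfa hμlim hlam1).congr
      fun n => hμ0 (φ n)
    rw [(hasDerivAt_seriesFun (abs_le_one_of_memB ha) hlam1).deriv]
    exact (tendsto_const_nhds_iff.1 h).symm
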